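/- arXiv:math/0511033 — 4 statements merged into one kernel-verified Lean document; each statement's English description precedes it below -/
import Mathlib

section
/- Let φ be a closure operator on a locally finite poset P, and let P_φ be the subposet of closed elements (elements x with φ(x) = x). For all a ≤ b in P: Σ_{x : φ(x) = b, a ≤ x} μ_P(a,x) equals μ_{P_φ}(a,b) if both a and b are closed, and equals 0 otherwise. -/
attribute [local instance] Classical.propDecidable

open Finset IncidenceAlgebra

/-! For closed `c`, grouping the interval `[a, c]` into the fibres of `φ` gives
`∑_{closed y ∈ [a, c]} F y = ∑_{x ∈ [a, c]} μ(a, x) = δ(a, c)`, where `F y` is the sum of `μ(a, x)`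
over the fibre `{x ≥ a | φ x = y}`. The closed elements above `a` are those above `φ a`, so this
says that on the poset of closed elements the partial sums of `F` from `φ a` are those of
`μ_{P_φ}(a, ·)` when `a` is closed and vanish otherwise. A function on a locally finite poset is
determined by its partial sums from a fixed base point. -/

theorem eq_of_forall_sum_Icc_eq {Q M : Type*} [PartialOrder Q] [LocallyFiniteOrder Q]
    [AddCancelCommMonoid M] {f g : Q → M} {a : Q}
    (h : ∀ c, a ≤ c → ∑ x ∈ Icc a c, f x = ∑ x ∈ Icc a c, g x) {b : Q} (hab : a ≤ b) :
    f b = g b := by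
  induction hn : #(Icc a b) using Nat.strong_induction_on generalizing b with
  | _ n ih =>
  have hIco : ∑ x ∈ Ico a b, f x = ∑ x ∈ Ico a b, g x := sum_congr rfl fun c hc => by
    obtain ⟨hac, hcb⟩ := mem_Ico.1 hc
    exact ih _ (hn ▸ card_lt_card (Icc_ssubset_Icc_right hab le_rfl hcb)) hac rfl
  have hsum := h b hab
  rw [Icc_eq_cons_Ico hab, sum_cons, sum_cons, hIco] at hsum
  exact add_right_cancel hsum

namespace ClosureOperator

variable {P M : Type*} [PartialOrder P] [LocallyFiniteOrder P] [AddCommMonoid M]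
  (φ : ClosureOperator P)

theorem sum_closed_sum_fiber_eq_sum_Icc (f : P → M) (a : P) {c : P} (hc : φ c = c) :
    ∑ y ∈ Icc a c with φ y = y, ∑ x ∈ Icc a y with φ x = y, f x = ∑ x ∈ Icc a c, f x := by
  have hmaps : ∀ x ∈ Icc a c, φ x ∈ {y ∈ Icc a c | φ y = y} := fun x hx => by
    obtain ⟨hax, hxc⟩ := mem_Icc.1 hx
    exact mem_filter.2 ⟨mem_Icc.2 ⟨hax.trans (φ.le_closure x), hc ▸ φ.monotone hxc⟩,
      φ.idempotent x⟩
  rw [← sum_fiberwise_of_maps_to hmaps]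
  refine sum_congr rfl fun y hy => ?_
  have hyc := (mem_Icc.1 (mem_filter.1 hy).1).2
  congr 1
  ext x
  simp only [mem_filter, mem_Icc]
  constructor
  · rintro ⟨⟨hax, hxy⟩, hφx⟩
    exact ⟨⟨hax, hxy.trans hyc⟩, hφx⟩
  · rintro ⟨⟨hax, -⟩, hφx⟩
    exact ⟨⟨hax, hφx ▸ φ.le_closure x⟩, hφx⟩

theorem sum_Icc_closeds_eq_sum_filter (f : P → M) {a : P} {a₀ c : {x : P // φ x = x}}
    (ha₀ : a₀.1 = φ a) :
    ∑ d ∈ Icc a₀ c, f d = ∑ y ∈ Icc a c.1 with φ y = y, f y := by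
  rw [subtype_Icc_eq, sum_subtype_eq_sum_filter]
  congr 1
  ext y
  simp only [mem_filter, mem_Icc, ha₀, and_congr_left_iff]
  intro hy _
  exact (φ.isClosed_iff.2 hy).closure_le_iff

theorem sum_Icc_closeds_sum_fiber_mu {𝕜 : Type*} [AddCommGroup 𝕜] [One 𝕜] {a : P}
    {a₀ : {x : P // φ x = x}} (ha₀ : a₀.1 = φ a) (c : {x : P // φ x = x}) :
    ∑ d ∈ Icc a₀ c, ∑ x ∈ Icc a d.1 with φ x = d.1, mu 𝕜 a x = if a = c.1 then 1 else 0 := by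
  rw [φ.sum_Icc_closeds_eq_sum_filter (fun y => ∑ x ∈ Icc a y with φ x = y, mu 𝕜 a x) ha₀,
    φ.sum_closed_sum_fiber_eq_sum_Icc _ a c.2, sum_Icc_mu_right]

end ClosureOperator

/-- Rota's crosscut/closure theorem: if `φ` is a closure operator on a locally
finite poset `P`, then for all `a ≤ b` in `P`, the sum `Σ_{x : a ≤ x, φ(x) = b} μ_P(a,x)`
equals `μ_{P_φ}(a,b)` if `a` and `b` are both closed, and equals `0` otherwise.  Here `P_φ`
is the subposet of closed elements of `P`. -/
theorem mobius_closure_operator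
    {P : Type*} [PartialOrder P] [LocallyFiniteOrder P]
    (φ : ClosureOperator P) (a b : P) (hab : a ≤ b) :
    (∑ x ∈ (Finset.Icc a b).filter (fun x => φ x = b), IncidenceAlgebra.mu ℤ a x) =
      if h : φ a = a ∧ φ b = b then
        IncidenceAlgebra.mu ℤ (α := {x : P // φ x = x}) ⟨a, h.1⟩ ⟨b, h.2⟩
      else 0 := by
  by_cases hb : φ b = b
  swap
  · rw [filter_false_of_mem fun x _ (hx : φ x = b) => hb (hx ▸ φ.idempotent x), sum_empty,
      dif_neg fun h => hb h.2]
  set a₀ : {x : P // φ x = x} := ⟨φ a, φ.idempotent a⟩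
  set F : {x : P // φ x = x} → ℤ := fun d => ∑ x ∈ Icc a d.1 with φ x = d.1, mu ℤ a x
  change F ⟨b, hb⟩ = _
  have hpartial := φ.sum_Icc_closeds_sum_fiber_mu (𝕜 := ℤ) (a₀ := a₀) rfl
  have ha₀b : a₀ ≤ ⟨b, hb⟩ := (φ.isClosed_iff.2 hb).closure_le_iff.2 hab
  split_ifs with h
  · rw [show (⟨a, h.1⟩ : {x : P // φ x = x}) = a₀ from Subtype.ext h.1.symm]
    refine eq_of_forall_sum_Icc_eq (fun c _ => ?_) ha₀b
    rw [hpartial, sum_Icc_mu_right]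
    exact if_congr (by rw [Subtype.ext_iff, show a₀.1 = a from h.1]) rfl rfl
  · have ha : φ a ≠ a := fun ha => h ⟨ha, hb⟩
    refine eq_of_forall_sum_Icc_eq (g := 0) (fun c _ => ?_) ha₀b
    rw [hpartial, if_neg fun (hac : a = c.1) => ha (by rw [hac]; exact c.2), Pi.zero_def,
      sum_const_zero]
end

section
/- Let P be a locally finite poset with minimum element x, and let P̂ = {y ∈ P : μ_P(x,y) ≠ 0}. Then for all z ∈ P̂, the Möbius function of the subposet P̂ satisfies μ_{P̂}(x,z) = μ_P(x,z). -/
/-! The recursion `μ(a, z) = -∑_{a ≤ y < z} μ(a, y)` only ever sees the values `μ(a, y)`, and the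
terms with `μ(a, y) = 0` contribute nothing to it. So on any subposet containing `a` and every `y`
with `μ(a, y) ≠ 0`, the same recursion produces the same values, by induction on the size of `[a, z)`. -/

attribute [local instance] Classical.propDecidable

open Finset

namespace IncidenceAlgebra

variable {𝕜 α : Type*} [AddCommGroup 𝕜] [One 𝕜] [Preorder α] [LocallyFiniteOrder α]
  [DecidableEq α]

theorem mu_subtype_eq_of_forall_mu_ne_zero {p : α → Prop} [DecidablePred p] {a : α} (ha : p a)
    (hp : ∀ y, mu 𝕜 a y ≠ 0 → p y) (z : α) (hz : p z) :
    mu 𝕜 (α := Subtype p) ⟨a, ha⟩ ⟨z, hz⟩ = mu 𝕜 a z := by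
  rcases eq_or_ne a z with rfl | haz
  · simp
  rw [mu_eq_neg_sum_Ico_of_ne (Subtype.coe_ne_coe.1 haz), mu_eq_neg_sum_Ico_of_ne haz,
    subtype_Ico_eq]
  congr 1
  calc ∑ y ∈ (Ico a z).subtype p, mu 𝕜 ⟨a, ha⟩ y
      = ∑ y ∈ (Ico a z).subtype p, mu 𝕜 a y.1 := sum_congr rfl fun y hy =>
        mu_subtype_eq_of_forall_mu_ne_zero ha hp y.1 y.2
    _ = ∑ y ∈ Ico a z, mu 𝕜 a y := by
      rw [sum_subtype_eq_sum_filter, sum_filter_of_ne fun y _ hy => hp y hy]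
termination_by (Ico a z).card
decreasing_by
  obtain ⟨hay, hyz⟩ := mem_Ico.1 (mem_subtype.1 hy)
  exact card_lt_card ⟨Ico_subset_Ico_right hyz.le,
    fun h => (mem_Ico.1 (h (mem_Ico.2 ⟨hay, hyz⟩))).2.false⟩

end IncidenceAlgebra

/-- let `P` be a locally finite poset with minimum element `⊥`, and let
`P̂ = {y ∈ P : μ_P(⊥, y) ≠ 0}`.  Then for every `z ∈ P̂`, the Möbius function of the
subposet `P̂` satisfies `μ_{P̂}(⊥, z) = μ_P(⊥, z)`. -/
theorem mobius_restrict_nonzero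
    {P : Type*} [PartialOrder P] [OrderBot P] [LocallyFiniteOrder P]
    (z : P) (hz : IncidenceAlgebra.mu ℤ (⊥ : P) z ≠ 0) :
    IncidenceAlgebra.mu ℤ (α := {y : P // IncidenceAlgebra.mu ℤ (⊥ : P) y ≠ 0})
        ⟨⊥, by simp⟩ ⟨z, hz⟩ =
      IncidenceAlgebra.mu ℤ (⊥ : P) z :=
  IncidenceAlgebra.mu_subtype_eq_of_forall_mu_ne_zero _ (fun _ h => h) z hz
end

section
/- For matroids M(S) and N(T) on disjoint ground sets S and T, the rank function of the free product M □ N satisfies ρ_{M□N}(A) = ρ_M(A ∩ S) + ρ_N(A ∩ T) + min{ρ(M) - ρ_M(A ∩ S), |A ∩ T| - ρ_N(A ∩ T)} for all A ⊆ S ∪ T. -/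
/-!
If `I` is independent in `M □ N`, it lies in a base `B`, and comparing the nullities of
`I ∩ T ⊆ B ∩ T` in `N` (the latter is `|B ∩ T| - ρ(N) = ρ(M) - |B ∩ S|`) gives
`|I| ≤ ρ(M) + ρ_N(I ∩ T)`; also `|I| ≤ ρ_M(A ∩ S) + |A ∩ T|` when `I ⊆ A`.
Conversely, a basis `J` of `A ∩ S`, a basis `K` of `A ∩ T` and `min (ρ(M) - |J|) |A ∩ T \ K|`
further elements of `A ∩ T` form an independent set of `M □ N`: extend `K` to a base of `N` and
`J` inside a base of `M` until the cardinality is `ρ(M) + ρ(N)`. The minimum of the two upper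
bounds equals the size of this set.
-/

open Matroid

variable {α : Type*}

/-- The contraction `M / C` of a matroid by a set, defined as the dual of the
deletion (restriction to the complement) of the dual. Its ground set is `M.E \ C`. -/
def Matroid.con (M : Matroid α) (C : Set α) : Matroid α := (M✶ ↾ (M.E \ C))✶

/-- The rank `ρ(M)` of a matroid (as a value in `ℕ∞`): the common cardinality of its bases. -/
noncomputable def Matroid.erank (M : Matroid α) : ℕ∞ := ⨆ B ∈ {B | M.IsBase B}, B.encard

/-- The rank function `ρ_M(X)` of a matroid: the rank of the restriction to `X`. -/
noncomputable def Matroid.rnk (M : Matroid α) (X : Set α) : ℕ∞ := (M ↾ X).erank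

/-- `IsFreeProduct M N P` says that `P` is the free product `M □ N`: its ground set is
`M.E ∪ N.E`, and its bases are exactly the sets `B ⊆ M.E ∪ N.E` of cardinality
`ρ(M) + ρ(N)` such that `B ∩ M.E` is independent in `M` and `B ∩ N.E` spans `N`. -/
def IsFreeProduct (M N P : Matroid α) : Prop :=
  P.E = M.E ∪ N.E ∧ ∀ B : Set α,
    (P.IsBase B ↔ B ⊆ M.E ∪ N.E ∧ B.encard = M.erank + N.erank ∧
      M.Indep (B ∩ M.E) ∧ N.Spanning (B ∩ N.E))

/-- The rank-preserving weak order on matroids: `M ≤ N` iff `M` and `N` have the same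
ground set and every base of `M` is a base of `N`. -/
def weakLE (M N : Matroid α) : Prop := M.E = N.E ∧ ∀ B, M.IsBase B → N.IsBase B


open Set

namespace Matroid

variable {X Y : Set α}

lemma erank_eq_eRank (M : Matroid α) : M.erank = M.eRank := by
  obtain ⟨B, hB⟩ := M.exists_isBase
  refine le_antisymm (iSup₂_le fun B' hB' => (IsBase.encard_eq_eRank hB').le) ?_
  rw [← hB.encard_eq_eRank]
  exact le_iSup₂ (f := fun B _ => B.encard) B hB

lemma rnk_eq_eRk (M : Matroid α) (X : Set α) : M.rnk X = M.eRk X :=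
  (M ↾ X).erank_eq_eRank

/-- Monotonicity of the nullity `|X| - ρ(X)`, stated without truncated subtraction. -/
lemma encard_add_eRk_le_encard_add_eRk (M : Matroid α) (hXY : X ⊆ Y) :
    X.encard + M.eRk Y ≤ Y.encard + M.eRk X := by
  calc X.encard + M.eRk Y = X.encard + M.eRk (X ∪ Y \ X) := by rw [union_sdiff_cancel hXY]
    _ ≤ X.encard + (M.eRk X + (Y \ X).encard) := by grw [M.eRk_union_le_eRk_add_encard]
    _ = Y.encard + M.eRk X := by rw [← encard_sdiff_add_encard_of_subset hXY]; ring

end Matroid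

theorem add_add_min_tsub_tsub {R : Type*} [AddCommMonoid R] [LinearOrder R]
    [CanonicallyOrderedAdd R] [Sub R] [OrderedSub R] [IsOrderedAddMonoid R] {a b r k : R}
    (ha : a ≤ r) (hb : b ≤ k) : a + b + min (r - a) (k - b) = min (r + b) (a + k) := by
  rw [← min_add_add_left, add_right_comm, add_tsub_cancel_of_le ha, add_assoc,
    add_tsub_cancel_of_le hb]

theorem Set.encard_inter_add_encard_inter {S T I : Set α} (hST : Disjoint S T)
    (hI : I ⊆ S ∪ T) : (I ∩ S).encard + (I ∩ T).encard = I.encard := by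
  rw [← encard_union_eq (hST.mono inter_subset_right inter_subset_right),
    ← inter_union_distrib_left, inter_eq_left.2 hI]

namespace IsFreeProduct

variable {M N P : Matroid α} {B D I J : Set α}

lemma isBase_iff (hP : IsFreeProduct M N P) : P.IsBase B ↔ B ⊆ M.E ∪ N.E ∧
    B.encard = M.eRank + N.eRank ∧ M.Indep (B ∩ M.E) ∧ N.Spanning (B ∩ N.E) := by
  rw [hP.2, erank_eq_eRank, erank_eq_eRank]

lemma indep_inter_left (hP : IsFreeProduct M N P) (hI : P.Indep I) : M.Indep (I ∩ M.E) := by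
  obtain ⟨B, hB, hIB⟩ := hI.exists_isBase_superset
  exact (hP.isBase_iff.1 hB).2.2.1.subset (inter_subset_inter_left _ hIB)

lemma encard_le_of_indep [N.RankFinite] (hP : IsFreeProduct M N P) (hdisj : Disjoint M.E N.E)
    (hI : P.Indep I) : I.encard ≤ M.eRank + N.eRk (I ∩ N.E) := by
  obtain ⟨B, hB, hIB⟩ := hI.exists_isBase_superset
  obtain ⟨hBE, hBcard, -, hBN⟩ := hP.isBase_iff.1 hB
  have hnull := N.encard_add_eRk_le_encard_add_eRk (inter_subset_inter_left N.E hIB)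
  rw [hBN.eRk_eq] at hnull
  rw [← ENat.add_le_add_iff_right ((eRank_ne_top_iff N).2 ‹_›)]
  calc I.encard + N.eRank = (I ∩ M.E).encard + ((I ∩ N.E).encard + N.eRank) := by
        rw [← add_assoc, encard_inter_add_encard_inter hdisj (hIB.trans hBE)]
    _ ≤ (B ∩ M.E).encard + ((B ∩ N.E).encard + N.eRk (I ∩ N.E)) := by gcongr
    _ = M.eRank + N.eRk (I ∩ N.E) + N.eRank := by
        rw [← add_assoc, encard_inter_add_encard_inter hdisj hBE, hBcard]; ring

lemma eRk_le_min [N.RankFinite] (hP : IsFreeProduct M N P) (hdisj : Disjoint M.E N.E)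
    (A : Set α) :
    P.eRk A ≤ min (M.eRank + N.eRk (A ∩ N.E)) (M.eRk (A ∩ M.E) + (A ∩ N.E).encard) := by
  refine eRk_le_iff.2 fun I hIA hI => le_min ?_ ?_
  · exact (hP.encard_le_of_indep hdisj hI).trans
      (add_le_add_right (N.eRk_mono (inter_subset_inter_left _ hIA)) _)
  · rw [← encard_inter_add_encard_inter hdisj (hP.1 ▸ hI.subset_ground)]
    exact add_le_add ((hP.indep_inter_left hI).encard_le_eRk_of_subset
      (inter_subset_inter_left _ hIA)) (encard_mono (inter_subset_inter_left _ hIA))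

lemma indep_union_union (hP : IsFreeProduct M N P) (hdisj : Disjoint M.E N.E) (hJ : M.Indep J)
    (hB : N.IsBase B) (hD : D ⊆ N.E) (hDfin : D.Finite) (hDB : Disjoint D B)
    (hcard : J.encard + D.encard ≤ M.eRank) : P.Indep (J ∪ (D ∪ B)) := by
  obtain ⟨BM, hBM, hJBM⟩ := hJ.exists_isBase_superset
  have hJle : J.encard ≤ M.eRank - D.encard :=
    (ENat.addLECancellable_of_ne_top hDfin.encard_lt_top.ne).le_tsub_of_add_le_right hcard
  obtain ⟨J', hJJ', hJ'BM, hJ'card⟩ :=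
    exists_superset_subset_encard_eq hJBM hJle (hBM.encard_eq_eRank ▸ tsub_le_self)
  have hJ'E : J' ⊆ M.E := hJ'BM.trans hBM.subset_ground
  have hDBE : D ∪ B ⊆ N.E := union_subset hD hB.subset_ground
  refine (hP.isBase_iff.2 ⟨union_subset_union hJ'E hDBE, ?_, ?_, ?_⟩).indep.subset
    (union_subset_union_left _ hJJ')
  · rw [encard_union_eq (hdisj.mono hJ'E hDBE), encard_union_eq hDB, hJ'card,
      hB.encard_eq_eRank, ← add_assoc, tsub_add_cancel_of_le (le_of_add_le_right hcard)]
  · rw [union_inter_distrib_right, inter_eq_left.2 hJ'E, (hdisj.symm.mono_left hDBE).inter_eq,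
      union_empty]
    exact hBM.indep.subset hJ'BM
  · rw [union_inter_distrib_right, inter_eq_left.2 hDBE, (hdisj.mono_left hJ'E).inter_eq,
      empty_union]
    exact hB.spanning.superset subset_union_right hDBE

lemma le_eRk [N.Finite] (hP : IsFreeProduct M N P) (hdisj : Disjoint M.E N.E) (A : Set α) :
    M.eRk (A ∩ M.E) + N.eRk (A ∩ N.E) +
      min (M.eRank - M.eRk (A ∩ M.E)) ((A ∩ N.E).encard - N.eRk (A ∩ N.E)) ≤ P.eRk A := by
  obtain ⟨J, hJ⟩ := M.exists_isBasis (A ∩ M.E)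
  obtain ⟨K, hK⟩ := N.exists_isBasis (A ∩ N.E)
  obtain ⟨B, hB, hKB⟩ := hK.indep.exists_isBase_superset
  rw [← hJ.encard_eq_eRk, ← hK.encard_eq_eRk, ← encard_sdiff hK.subset hK.indep.finite]
  obtain ⟨X, hX, hXcard⟩ :=
    exists_subset_encard_eq (min_le_right (M.eRank - J.encard) ((A ∩ N.E) \ K).encard)
  have hXA : X ⊆ A ∩ N.E := hX.trans sdiff_subset
  have hXB : Disjoint X B := by
    refine disjoint_left.2 fun x hxX hxB => (hX hxX).2 ?_
    rw [← hK.inter_eq_of_subset_indep hKB hB.indep]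
    exact ⟨hxB, hXA hxX⟩
  have hXE : X ⊆ N.E := hXA.trans inter_subset_right
  have hind : P.Indep (J ∪ (K ∪ X)) := by
    refine (hP.indep_union_union hdisj hJ.indep hB hXE (N.ground_finite.subset hXE) hXB
      ?_).subset (union_subset_union_right _ ?_)
    · exact add_le_of_le_tsub_left_of_le hJ.indep.encard_le_eRank (hXcard ▸ min_le_left _ _)
    · exact union_subset (hKB.trans subset_union_right) subset_union_left
  calc _ = (J ∪ (K ∪ X)).encard := by
        rw [encard_union_eq (hdisj.mono hJ.indep.subset_ground
            (union_subset hK.indep.subset_ground hXE)),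
          encard_union_eq (disjoint_sdiff_right.mono_right hX), hXcard, add_assoc]
    _ ≤ P.eRk A := hind.encard_le_eRk_of_subset <| union_subset
        (hJ.subset.trans inter_subset_left)
        (union_subset (hK.subset.trans inter_subset_left) (hXA.trans inter_subset_left))

end IsFreeProduct

theorem freeProduct_rank_general
    (M N P : Matroid α) (hN : N.E.Finite)
    (hdisj : Disjoint M.E N.E) (hP : IsFreeProduct M N P)
    (A : Set α) :
    P.rnk A = M.rnk (A ∩ M.E) + N.rnk (A ∩ N.E) +
      min (M.erank - M.rnk (A ∩ M.E)) ((A ∩ N.E).encard - N.rnk (A ∩ N.E)) := by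
  have : N.Finite := ⟨hN⟩
  simp only [rnk_eq_eRk, erank_eq_eRank]
  refine le_antisymm ?_ (hP.le_eRk hdisj A)
  rw [add_add_min_tsub_tsub (M.eRk_le_eRank _) (N.eRk_le_encard _)]
  exact hP.eRk_le_min hdisj A

/-- rank function of the free product.  For matroids `M(S)`, `N(T)` on disjoint
ground sets and any `A ⊆ S ∪ T`, we have
`ρ_{M□N}(A) = ρ_M(A ∩ S) + ρ_N(A ∩ T) + min (ρ(M) - ρ_M(A ∩ S)) (|A ∩ T| - ρ_N(A ∩ T))`. -/
theorem freeProduct_rank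
    (M N P : Matroid α) (hM : M.E.Finite) (hN : N.E.Finite)
    (hdisj : Disjoint M.E N.E) (hP : IsFreeProduct M N P)
    (A : Set α) (hA : A ⊆ M.E ∪ N.E) :
    P.rnk A = M.rnk (A ∩ M.E) + N.rnk (A ∩ N.E) +
      min (M.erank - M.rnk (A ∩ M.E)) ((A ∩ N.E).encard - N.rnk (A ∩ N.E)) :=
  freeProduct_rank_general M N P hN hdisj hP A
end

section
/- For any matroid P on U and Q on V with U, V disjoint, the restriction of the free product satisfies (P □ Q)|U = P and the contraction satisfies (P □ Q)/U = Q. -/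
open Matroid

variable {α : Type*}

/-!
Every base of `P □ Q` meets `U` in an independent set of `P` and meets `V` in a spanning set
of `Q`, while the union of a base of `P` and a base of `Q` is a base of `P □ Q`. Hence the
independent sets of `(P □ Q)|U` are those of `P`, and a subset of `V` avoids some base of
`P □ Q` iff it avoids some base of `Q`, i.e. `(P □ Q)✶|V = Q✶`, which dualizes to
`(P □ Q)/U = Q`.
-/

lemma Matroid.erank_eq_eRank_s9 (M : Matroid α) : M.erank = M.eRank := by
  rw [erank, eRank, iSup_subtype']
  rfl

namespace IsFreeProduct

variable {P Q F : Matroid α}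

lemma isBase_union (h : Disjoint P.E Q.E) (hF : IsFreeProduct P Q F) {BP BQ : Set α}
    (hBP : P.IsBase BP) (hBQ : Q.IsBase BQ) : F.IsBase (BP ∪ BQ) := by
  have hPE : BP ⊆ P.E := hBP.subset_ground
  have hQE : BQ ⊆ Q.E := hBQ.subset_ground
  have hP : (BP ∪ BQ) ∩ P.E = BP := by
    rw [Set.union_inter_distrib_right, Set.inter_eq_left.2 hPE,
      (h.symm.mono_left hQE).inter_eq, Set.union_empty]
  have hQ : (BP ∪ BQ) ∩ Q.E = BQ := by
    rw [Set.union_inter_distrib_right, Set.inter_eq_left.2 hQE,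
      (h.mono_left hPE).inter_eq, Set.empty_union]
  refine (hF.2 _).2 ⟨Set.union_subset_union hPE hQE, ?_, by rw [hP]; exact hBP.indep,
    by rw [hQ]; exact hBQ.spanning⟩
  rw [Set.encard_union_eq (h.mono hPE hQE), erank_eq_eRank_s9, erank_eq_eRank_s9,
    hBP.encard_eq_eRank, hBQ.encard_eq_eRank]

lemma indep_inter_left_s9 (hF : IsFreeProduct P Q F) {I : Set α} (hI : F.Indep I) :
    P.Indep (I ∩ P.E) := by
  obtain ⟨B, hB, hIB⟩ := hI.exists_isBase_superset
  exact ((hF.2 B).1 hB).2.2.1.subset (Set.inter_subset_inter_left _ hIB)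

lemma restrict_eq_left (h : Disjoint P.E Q.E) (hF : IsFreeProduct P Q F) : F ↾ P.E = P := by
  refine ext_indep rfl fun I hIP => ?_
  rw [restrict_indep_iff]
  refine ⟨fun ⟨hFI, _⟩ => Set.inter_eq_left.2 hIP ▸ hF.indep_inter_left_s9 hFI,
    fun hPI => ⟨?_, hIP⟩⟩
  obtain ⟨BP, hBP, hIBP⟩ := hPI.exists_isBase_superset
  obtain ⟨BQ, hBQ⟩ := Q.exists_isBase
  exact (hF.isBase_union h hBP hBQ).indep.subset (hIBP.trans Set.subset_union_left)

lemma dual_restrict_eq_right (h : Disjoint P.E Q.E) (hF : IsFreeProduct P Q F) :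
    F✶ ↾ Q.E = Q✶ := by
  refine ext_indep rfl fun I (hIQ : I ⊆ Q.E) => ?_
  have hIF : I ⊆ F.E := hF.1 ▸ hIQ.trans Set.subset_union_right
  rw [restrict_indep_iff, dual_indep_iff_exists' (M := F), dual_indep_iff_exists' (M := Q),
    and_iff_right hIF, and_iff_left hIQ, and_iff_right hIQ]
  constructor
  · rintro ⟨B, hB, hIB⟩
    obtain ⟨BQ, hBQ, hBQB⟩ := ((hF.2 B).1 hB).2.2.2.exists_isBase_subset
    exact ⟨BQ, hBQ, hIB.mono_right (hBQB.trans Set.inter_subset_left)⟩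
  · rintro ⟨BQ, hBQ, hIBQ⟩
    obtain ⟨BP, hBP⟩ := P.exists_isBase
    exact ⟨BP ∪ BQ, hF.isBase_union h hBP hBQ,
      Set.disjoint_union_right.2 ⟨h.symm.mono hIQ hBP.subset_ground, hIBQ⟩⟩

lemma con_eq_right (h : Disjoint P.E Q.E) (hF : IsFreeProduct P Q F) : F.con P.E = Q := by
  have hQE : F.E \ P.E = Q.E := by rw [hF.1, Set.union_sdiff_left, h.symm.sdiff_eq_left]
  rw [Matroid.con, hQE, hF.dual_restrict_eq_right h, dual_dual]

end IsFreeProduct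

theorem freeProduct_restrict_contract_general
    (P Q : Matroid α) (h : Disjoint P.E Q.E)
    (F : Matroid α) (hF : IsFreeProduct P Q F) :
    F ↾ P.E = P ∧ F.con P.E = Q :=
  ⟨hF.restrict_eq_left h, hF.con_eq_right h⟩

/-- for matroids `P` on `U` and `Q` on `V` with `U, V` disjoint, the free
product satisfies `(P □ Q)|U = P` and `(P □ Q)/U = Q`. -/
theorem freeProduct_restrict_contract
    (P Q : Matroid α) (hP : P.E.Finite) (hQ : Q.E.Finite) (h : Disjoint P.E Q.E)
    (F : Matroid α) (hF : IsFreeProduct P Q F) :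
    F ↾ P.E = P ∧ F.con P.E = Q :=
  freeProduct_restrict_contract_general P Q h F hF
end
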